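/- arXiv:1401.3724 — 6 statements merged into one kernel-verified Lean document; each statement's English description precedes it below -/
import Mathlib

section
/- For integers m ≥ 2 and 1 ≤ k ≤ m-1, assuming Gauss' digamma theorem, ∑_{r=1}^{m-1} ψ(r/m)·cos(2πrk/m) = m·ln(2·sin(kπ/m)) + γ. -/
open Real Finset

/-- The digamma function ψ(x) = Γ'(x)/Γ(x). -/
noncomputable def digamma (x : ℝ) : ℝ := deriv Real.Gamma x / Real.Gamma x

/-!
Substitute Gauss' formula and sum against `cos (2πrk/m)` term by term. The constant term meets
`∑ r, cos (2πrk/m) = -1`; the cotangent term cancels under the reflection `r ↦ m - r`; and the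
log-sine term is a discrete cosine transform, inverted by the orthogonality relations
`∑ r, cos (2πrk/m) cos (2πrl/m) = (m/2)([l = k] + [l = m - k]) - 1`. This leaves
`m log sin (πk/m) - ∑ l, log sin (πl/m)`, and the last sum equals `log m - (m - 1) log 2`
because `∏ l, (1 - ζ ^ l) = m` for a primitive `m`-th root of unity `ζ`, while
`|1 - ζ ^ l| = 2 sin (πl/m)`.
-/

theorem sum_range_cos_two_pi_mul_div (m : ℕ) (n : ℤ) :
    ∑ r ∈ range m, cos (2 * π * r * n / m) = if (m : ℤ) ∣ n then (m : ℝ) else 0 := by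
  rcases eq_or_ne m 0 with rfl | hm
  · simp
  set ζ := Complex.exp (2 * π * Complex.I / m)
  have hζ : IsPrimitiveRoot ζ m := Complex.isPrimitiveRoot_exp m hm
  have hterm (r : ℕ) : cos (2 * π * r * n / m) = ((ζ ^ n) ^ r).re := by
    rw [← zpow_natCast, ← zpow_mul, ← Complex.exp_int_mul, ← Complex.exp_ofReal_mul_I_re]
    congr 2
    push_cast
    ring
  rw [sum_congr rfl fun r _ => hterm r, ← Complex.re_sum]
  split_ifs with h
  · simp [(hζ.zpow_eq_one_iff_dvd n).2 h]
  · rw [geom_sum_eq ((hζ.zpow_eq_one_iff_dvd n).not.2 h), ← zpow_natCast, ← zpow_mul, mul_comm,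
      zpow_mul, zpow_natCast, hζ.pow_eq_one, one_zpow]
    simp

theorem sum_range_eq_add_sum_Icc {M : Type*} [AddCommMonoid M] {m : ℕ} (hm : 0 < m)
    (f : ℕ → M) :
    ∑ r ∈ range m, f r = f 0 + ∑ r ∈ Icc 1 (m - 1), f r := by
  obtain ⟨n, rfl⟩ := Nat.exists_eq_add_one_of_ne_zero hm.ne'
  rw [range_eq_Ico, sum_eq_sum_Ico_succ_bot hm, zero_add, Ico_add_one_right_eq_Icc,
    Nat.add_sub_cancel]

theorem sum_range_cos_mul_cos (m : ℕ) (k l : ℤ) :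
    ∑ r ∈ range m, cos (2 * π * r * k / m) * cos (2 * π * r * l / m) =
      ((if (m : ℤ) ∣ k - l then (m : ℝ) else 0) +
        (if (m : ℤ) ∣ k + l then (m : ℝ) else 0)) / 2 := by
  rw [← sum_range_cos_two_pi_mul_div, ← sum_range_cos_two_pi_mul_div, ← sum_add_distrib, sum_div]
  refine sum_congr rfl fun r _ => ?_
  rw [eq_div_iff two_ne_zero, mul_comm, ← mul_assoc, two_mul_cos_mul_cos]
  push_cast
  congr 2 <;> ring

theorem sum_Icc_cos_mul_cos {m k l : ℕ} (hk : k ∈ Icc 1 (m - 1)) (hl : l ∈ Icc 1 (m - 1)) :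
    ∑ r ∈ Icc 1 (m - 1), cos (2 * π * r * k / m) * cos (2 * π * r * l / m) =
      (if l = k then (m : ℝ) / 2 else 0) + (if l = m - k then (m : ℝ) / 2 else 0) - 1 := by
  rw [mem_Icc] at hk hl
  have hdiff : (m : ℤ) ∣ k - l ↔ l = k := by
    refine ⟨fun h => ?_, fun h => by simp [h]⟩
    have := Int.eq_zero_of_abs_lt_dvd h (by rw [abs_lt]; omega)
    omega
  have hsum : (m : ℤ) ∣ k + l ↔ l = m - k := by
    rw [← dvd_sub_self_right]
    refine ⟨fun h => ?_, fun h => by rw [h]; push_cast [Nat.cast_sub (by omega : k ≤ m)]; simp⟩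
    have := Int.eq_zero_of_abs_lt_dvd h (by rw [abs_lt]; omega)
    omega
  have h := sum_range_cos_mul_cos m k l
  rw [sum_range_eq_add_sum_Icc (by omega)] at h
  simp only [hdiff, hsum, Int.cast_natCast, CharP.cast_eq_zero, mul_zero, zero_mul, zero_div,
    cos_zero, mul_one] at h
  split_ifs at h ⊢ <;> linarith

theorem sum_Icc_cos_two_pi_mul_div {m k : ℕ} (hk : k ∈ Icc 1 (m - 1)) :
    ∑ r ∈ Icc 1 (m - 1), cos (2 * π * r * k / m) = -1 := by
  rw [mem_Icc] at hk
  have hndvd : ¬ (m : ℤ) ∣ k := fun h => by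
    have := Int.eq_zero_of_abs_lt_dvd h (by rw [abs_lt]; omega)
    omega
  have h := sum_range_cos_two_pi_mul_div m k
  rw [sum_range_eq_add_sum_Icc (by omega), if_neg hndvd] at h
  simp only [Int.cast_natCast, CharP.cast_eq_zero, mul_zero, zero_mul, zero_div, cos_zero] at h
  linarith

theorem sum_mul_sum_Icc_cos_mul_cos {m k : ℕ} (hk : k ∈ Icc 1 (m - 1)) (g : ℕ → ℝ) :
    ∑ l ∈ Icc 1 (m - 1),
        g l * ∑ r ∈ Icc 1 (m - 1), cos (2 * π * r * k / m) * cos (2 * π * r * l / m) =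
      m / 2 * (g k + g (m - k)) - ∑ l ∈ Icc 1 (m - 1), g l := by
  have hmk : m - k ∈ Icc 1 (m - 1) := by simp only [mem_Icc] at hk ⊢; omega
  rw [sum_congr rfl fun l hl => by rw [sum_Icc_cos_mul_cos hk hl]]
  simp only [mul_sub, mul_add, mul_ite, mul_zero, mul_one, sum_sub_distrib, sum_add_distrib,
    sum_ite_eq', if_pos hk, if_pos hmk]
  ring

theorem sum_Icc_eq_zero_of_reflect_neg {m : ℕ} {f : ℕ → ℝ}
    (hf : ∀ r ∈ Icc 1 (m - 1), f (m - r) = -f r) : ∑ r ∈ Icc 1 (m - 1), f r = 0 := by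
  have h : ∑ r ∈ Icc 1 (m - 1), f (m - r) = ∑ r ∈ Icc 1 (m - 1), f r :=
    sum_nbij' (m - ·) (m - ·) (by simp only [mem_Icc]; omega) (by simp only [mem_Icc]; omega)
      (by simp only [mem_Icc]; omega) (by simp only [mem_Icc]; omega) fun _ _ => rfl
  rw [sum_congr rfl hf, sum_neg_distrib] at h
  linarith

theorem sum_Icc_cot_mul_cos (m k : ℕ) :
    ∑ r ∈ Icc 1 (m - 1), cot (π * r / m) * cos (2 * π * r * k / m) = 0 := by
  refine sum_Icc_eq_zero_of_reflect_neg fun r hr => ?_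
  rw [mem_Icc] at hr
  have hm : (m : ℝ) ≠ 0 := Nat.cast_ne_zero.2 (by omega)
  have hcot : π * (m - r : ℕ) / m = π - π * r / m := by
    rw [Nat.cast_sub (by omega)]
    field_simp
  have hcos : 2 * π * (m - r : ℕ) * k / m = k * (2 * π) - 2 * π * r * k / m := by
    rw [Nat.cast_sub (by omega)]
    field_simp
  rw [hcot, hcos, cos_nat_mul_two_pi_sub, cot_eq_cos_div_sin, cot_eq_cos_div_sin, cos_pi_sub,
    sin_pi_sub]
  ring

theorem sin_pi_mul_div_pos {m l : ℕ} (hl : l ∈ Icc 1 (m - 1)) : 0 < sin (π * l / m) := by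
  rw [mem_Icc] at hl
  have hm : (0 : ℝ) < m := Nat.cast_pos.2 (by omega)
  have hlm : (l : ℝ) < m := Nat.cast_lt.2 (by omega)
  have hl0 : (0 : ℝ) < l := Nat.cast_pos.2 (by omega)
  apply sin_pos_of_pos_of_lt_pi (by positivity)
  rw [div_lt_iff₀ hm]
  nlinarith [pi_pos]

theorem prod_Icc_one_sub_pow {R : Type*} [CommRing R] [IsDomain R] {m : ℕ} {ζ : R}
    (hζ : IsPrimitiveRoot ζ m) (hm : m ≠ 0) : ∏ l ∈ Icc 1 (m - 1), (1 - ζ ^ l) = m := by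
  obtain ⟨n, rfl⟩ := Nat.exists_eq_add_one_of_ne_zero hm
  rw [Nat.add_sub_cancel, ← Ico_add_one_right_eq_Icc, ← zero_add 1, ← prod_Ico_add',
    ← range_eq_Ico, hζ.prod_one_sub_pow_eq_order]
  push_cast
  rfl

theorem sum_Icc_log_two_mul_sin (m : ℕ) :
    ∑ l ∈ Icc 1 (m - 1), log (2 * sin (π * l / m)) = log m := by
  rcases eq_or_ne m 0 with rfl | hm
  · simp
  set ζ := Complex.exp (2 * π * Complex.I / m)
  have hζ : IsPrimitiveRoot ζ m := Complex.isPrimitiveRoot_exp m hm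
  have hnorm (l : ℕ) : log (2 * sin (π * l / m)) = log ‖1 - ζ ^ l‖ := by
    have hpow : ζ ^ l = Complex.exp (Complex.I * ↑(2 * π * l / m)) := by
      rw [← Complex.exp_nat_mul]
      congr 1
      push_cast
      ring
    rw [hpow, norm_sub_rev, Complex.norm_exp_I_mul_ofReal_sub_one, Real.norm_eq_abs, log_abs,
      show 2 * π * l / m / 2 = π * l / m by ring]
  have hne : ∀ l ∈ Icc 1 (m - 1), ‖1 - ζ ^ l‖ ≠ 0 := fun l hl => by
    rw [mem_Icc] at hl
    exact norm_ne_zero_iff.2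
      (sub_ne_zero.2 (hζ.pow_ne_one_of_pos_of_lt (by omega) (by omega)).symm)
  rw [sum_congr rfl fun l _ => hnorm l, ← log_prod hne, ← norm_prod, prod_Icc_one_sub_pow hζ hm,
    Complex.norm_natCast]

theorem sum_Icc_log_sin (m : ℕ) :
    ∑ l ∈ Icc 1 (m - 1), log (sin (π * l / m)) = log m - (m - 1 : ℕ) * log 2 := by
  have h := sum_Icc_log_two_mul_sin m
  rw [sum_congr rfl fun l hl => log_mul two_ne_zero (sin_pi_mul_div_pos hl).ne', sum_add_distrib,
    sum_const, Nat.card_Icc, nsmul_eq_mul, Nat.add_sub_cancel] at h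
  linarith

theorem stmt12_general (m : ℕ) (k : ℕ) (hk1 : 1 ≤ k) (hk2 : k ≤ m - 1)
    (hGauss : ∀ r : ℕ, 1 ≤ r → r ≤ m - 1 →
      digamma (r / m) =
        -Real.eulerMascheroniConstant - Real.log (2 * m) - (π / 2) * Real.cot (π * r / m)
          + ∑ l ∈ Finset.Icc 1 (m - 1),
              Real.cos (2 * π * r * l / m) * Real.log (Real.sin (π * l / m))) :
    (∑ r ∈ Finset.Icc 1 (m - 1), digamma (r / m) * Real.cos (2 * π * r * k / m)) =
      m * Real.log (2 * Real.sin (k * π / m)) + Real.eulerMascheroniConstant := by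
  have hk : k ∈ Icc 1 (m - 1) := mem_Icc.2 ⟨hk1, hk2⟩
  have hm : (m : ℝ) ≠ 0 := Nat.cast_ne_zero.2 (by omega)
  have hsin_reflect : sin (π * (m - k : ℕ) / m) = sin (π * k / m) := by
    rw [Nat.cast_sub (by omega), mul_sub, sub_div, mul_div_cancel_right₀ π hm, sin_pi_sub]
  calc ∑ r ∈ Icc 1 (m - 1), digamma (r / m) * cos (2 * π * r * k / m)
      = ∑ r ∈ Icc 1 (m - 1),
          ((-eulerMascheroniConstant - log (2 * m)) * cos (2 * π * r * k / m)
          - π / 2 * (cot (π * r / m) * cos (2 * π * r * k / m))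
          + ∑ l ∈ Icc 1 (m - 1), log (sin (π * l / m)) *
              (cos (2 * π * r * k / m) * cos (2 * π * r * l / m))) := by
        refine sum_congr rfl fun r hr => ?_
        rw [hGauss r (mem_Icc.1 hr).1 (mem_Icc.1 hr).2, add_mul, sum_mul]
        congr 1
        · ring
        · exact sum_congr rfl fun l _ => by ring
    _ = (-eulerMascheroniConstant - log (2 * m)) *
            ∑ r ∈ Icc 1 (m - 1), cos (2 * π * r * k / m)
          - π / 2 * ∑ r ∈ Icc 1 (m - 1), cot (π * r / m) * cos (2 * π * r * k / m)
          + ∑ l ∈ Icc 1 (m - 1), log (sin (π * l / m)) *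
              ∑ r ∈ Icc 1 (m - 1), cos (2 * π * r * k / m) * cos (2 * π * r * l / m) := by
        rw [sum_add_distrib, sum_sub_distrib, ← mul_sum, ← mul_sum, sum_comm]
        simp only [mul_sum]
    _ = m * log (2 * sin (k * π / m)) + eulerMascheroniConstant := by
        rw [sum_Icc_cos_two_pi_mul_div hk, sum_Icc_cot_mul_cos, sum_mul_sum_Icc_cos_mul_cos hk,
          hsin_reflect, sum_Icc_log_sin, mul_comm (k : ℝ) π,
          log_mul two_ne_zero (sin_pi_mul_div_pos hk).ne', log_mul two_ne_zero hm,
          Nat.cast_sub (by omega)]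
        ring

theorem stmt12 (m : ℕ) (hm : 2 ≤ m) (k : ℕ) (hk1 : 1 ≤ k) (hk2 : k ≤ m - 1)
    (hGauss : ∀ r : ℕ, 1 ≤ r → r ≤ m - 1 →
      digamma (r / m) =
        -Real.eulerMascheroniConstant - Real.log (2 * m) - (π / 2) * Real.cot (π * r / m)
          + ∑ l ∈ Finset.Icc 1 (m - 1),
              Real.cos (2 * π * r * l / m) * Real.log (Real.sin (π * l / m))) :
    (∑ r ∈ Finset.Icc 1 (m - 1), digamma (r / m) * Real.cos (2 * π * r * k / m)) =
      m * Real.log (2 * Real.sin (k * π / m)) + Real.eulerMascheroniConstant :=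
  stmt12_general m k hk1 hk2 hGauss
end

section
/- For integers m ≥ 2 and 1 ≤ k ≤ m-1, assuming Gauss' digamma theorem, ∑_{r=1}^{m-1} ψ(r/m)·sin(2πrk/m) = (π/2)·(2k - m). -/
/-!
Substitute Gauss' formula. Under the reflection `r ↦ m - r` the constant term and the
logarithmic sum are invariant while `sin (2πrk/m)` changes sign, so their contributions
cancel. Only the cotangent term survives, and
`cot θ · sin 2kθ = ∑_{j<k} (cos 2jθ + cos 2(j+1)θ)` turns it into sums
`∑_{r=1}^{m-1} cos (2πrj/m)`, which equal `-1` for `0 < j < m` since the `m`-th roots of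
unity sum to zero. This gives `∑ cot (πr/m) sin (2πrk/m) = m - 2k`.
-/

open Real Finset

theorem sum_Icc_one_sub_one_eq_zero_of_reflect_eq_neg (m : ℕ) (f : ℕ → ℝ)
    (hf : ∀ r ≤ m, f (m - r) = -f r) : ∑ r ∈ Icc 1 (m - 1), f r = 0 := by
  have hreflect : ∑ r ∈ Icc 1 (m - 1), f (m - r) = ∑ r ∈ Icc 1 (m - 1), f r :=
    sum_nbij' (m - ·) (m - ·) (by intro r; simp only [mem_Icc]; omega)
      (by intro r; simp only [mem_Icc]; omega) (by intro r; simp only [mem_Icc]; omega)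
      (by intro r; simp only [mem_Icc]; omega) fun _ _ => rfl
  rw [sum_congr rfl fun r hr => hf r (by simp at hr; omega), sum_neg_distrib] at hreflect
  linarith

theorem two_pi_mul_sub_div_eq (m r : ℕ) (hm : m ≠ 0) (hr : r ≤ m) (n : ℝ) :
    2 * π * ((m - r : ℕ) : ℝ) * n / m = n * (2 * π) - 2 * π * r * n / m := by
  rw [Nat.cast_sub hr]
  field_simp

theorem sin_two_pi_mul_sub_div (m r k : ℕ) (hr : r ≤ m) :
    sin (2 * π * ((m - r : ℕ) : ℝ) * k / m) = -sin (2 * π * r * k / m) := by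
  rcases eq_or_ne m 0 with rfl | hm
  · simp
  rw [two_pi_mul_sub_div_eq m r hm hr, sin_nat_mul_two_pi_sub]

theorem cos_two_pi_mul_sub_div (m r k : ℕ) (hr : r ≤ m) :
    cos (2 * π * ((m - r : ℕ) : ℝ) * k / m) = cos (2 * π * r * k / m) := by
  rcases eq_or_ne m 0 with rfl | hm
  · obtain rfl : r = 0 := by omega
    simp
  rw [two_pi_mul_sub_div_eq m r hm hr, cos_nat_mul_two_pi_sub]

theorem sum_range_cos_two_pi_mul_div_eq_zero (m j : ℕ) (hj : ¬ m ∣ j) :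
    ∑ r ∈ range m, cos (2 * π * r * j / m) = 0 := by
  rcases eq_or_ne m 0 with rfl | hm
  · simp
  set ω : ℂ := Complex.exp (2 * π * Complex.I / m)
  have hω : IsPrimitiveRoot ω m := Complex.isPrimitiveRoot_exp m hm
  have hωj : ω ^ j ≠ 1 := by rwa [Ne, hω.pow_eq_one_iff_dvd]
  have hωjm : (ω ^ j) ^ m = 1 := by rw [← pow_mul, mul_comm, pow_mul, hω.pow_eq_one, one_pow]
  have hre (r : ℕ) : ((ω ^ j) ^ r).re = cos (2 * π * r * j / m) := by
    rw [← pow_mul, ← Complex.exp_nat_mul, ← Complex.exp_ofReal_mul_I_re]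
    push_cast
    ring_nf
  have hgeom : ∑ r ∈ range m, (ω ^ j) ^ r = 0 := by
    rw [geom_sum_eq hωj, hωjm, sub_self, zero_div]
  simpa [Complex.re_sum, hre] using congrArg Complex.re hgeom

theorem sum_Icc_cos_two_pi_mul_div_eq_neg_one (m j : ℕ) (hm : m ≠ 0) (hj : ¬ m ∣ j) :
    ∑ r ∈ Icc 1 (m - 1), cos (2 * π * r * j / m) = -1 := by
  have h := sum_range_cos_two_pi_mul_div_eq_zero m j hj
  obtain ⟨n, rfl⟩ := Nat.exists_eq_add_one_of_ne_zero hm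
  rw [range_eq_Ico, sum_eq_sum_Ico_succ_bot n.succ_pos, zero_add, Nat.succ_eq_add_one,
    Ico_add_one_right_eq_Icc] at h
  rw [add_tsub_cancel_right]
  simp only [CharP.cast_eq_zero, mul_zero, zero_mul, zero_div, cos_zero] at h
  linarith

theorem cos_mul_sin_two_mul_nat_mul (θ : ℝ) (k : ℕ) :
    cos θ * sin (2 * k * θ) =
      sin θ * ∑ j ∈ range k, (cos (2 * j * θ) + cos (2 * (j + 1) * θ)) := by
  induction k with
  | zero => simp
  | succ k ih =>
    rw [sum_range_succ, mul_add, ← ih]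
    push_cast
    rw [show 2 * ((k : ℝ) + 1) * θ = 2 * k * θ + 2 * θ by ring, sin_add, cos_add, sin_two_mul,
      cos_two_mul]
    linear_combination 2 * cos θ * sin (2 * k * θ) * sin_sq_add_cos_sq θ

theorem cot_mul_sin_two_mul_nat_mul (θ : ℝ) (hθ : sin θ ≠ 0) (k : ℕ) :
    cot θ * sin (2 * k * θ) = ∑ j ∈ range k, (cos (2 * j * θ) + cos (2 * (j + 1) * θ)) := by
  rw [cot_eq_cos_div_sin, div_mul_eq_mul_div, cos_mul_sin_two_mul_nat_mul,
    mul_div_cancel_left₀ _ hθ]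

theorem sin_pi_mul_div_ne_zero {m r : ℕ} (hr : 0 < r) (hrm : r < m) : sin (π * r / m) ≠ 0 := by
  have hm : (0 : ℝ) < m := by exact_mod_cast hr.trans hrm
  have hr' : (0 : ℝ) < r := by exact_mod_cast hr
  refine (sin_pos_of_pos_of_lt_pi (by positivity) ?_).ne'
  rw [div_lt_iff₀ hm]
  exact mul_lt_mul_of_pos_left (by exact_mod_cast hrm) pi_pos

theorem cot_pi_mul_div_mul_sin_two_pi_mul_div {m r : ℕ} (hr : 0 < r) (hrm : r < m) (k : ℕ) :
    cot (π * r / m) * sin (2 * π * r * k / m) =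
      ∑ j ∈ range k, (cos (2 * π * r * j / m) + cos (2 * π * r * (j + 1 : ℕ) / m)) := by
  rw [show 2 * π * r * k / m = 2 * k * (π * r / m) by ring,
    cot_mul_sin_two_mul_nat_mul _ (sin_pi_mul_div_ne_zero hr hrm) k]
  congr! 3 with j <;> push_cast <;> ring

theorem sum_Icc_cot_mul_sin_two_pi_mul_div (m k : ℕ) (hk : 0 < k) (hkm : k < m) :
    ∑ r ∈ Icc 1 (m - 1), cot (π * r / m) * sin (2 * π * r * k / m) = m - 2 * k := by
  have hS (j : ℕ) (hj : 0 < j) (hjm : j < m) :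
      ∑ r ∈ Icc 1 (m - 1), cos (2 * π * r * j / m) = -1 :=
    sum_Icc_cos_two_pi_mul_div_eq_neg_one m j (by omega) (Nat.not_dvd_of_pos_of_lt hj hjm)
  have hS₀ : ∑ r ∈ Icc 1 (m - 1), cos (2 * π * r * (0 : ℕ) / m) = m - 1 := by
    simp [Nat.cast_sub (show 1 ≤ m by omega)]
  have hpair (j : ℕ) : ∑ r ∈ Icc 1 (m - 1),
      (cos (2 * π * r * j / m) + cos (2 * π * r * (j + 1 : ℕ) / m)) =
      ∑ r ∈ Icc 1 (m - 1), cos (2 * π * r * j / m) +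
        ∑ r ∈ Icc 1 (m - 1), cos (2 * π * r * (j + 1 : ℕ) / m) :=
    sum_add_distrib
  obtain ⟨k, rfl⟩ := Nat.exists_eq_add_one_of_ne_zero hk.ne'
  rw [sum_congr rfl fun r hr => cot_pi_mul_div_mul_sin_two_pi_mul_div (by simp at hr; omega)
    (by simp at hr; omega) _, sum_comm, sum_range_succ', hpair, hS₀, hS 1 one_pos (by omega)]
  rw [sum_congr rfl fun j hj => by
    rw [hpair, hS (j + 1) j.succ_pos (by simp at hj; omega), hS (j + 1 + 1) (by omega)
      (by simp at hj; omega)]]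
  simp only [sum_const, card_range, nsmul_eq_mul, Nat.cast_add, Nat.cast_one]
  ring

theorem stmt13_general (m : ℕ) (k : ℕ) (hk1 : 1 ≤ k) (hk2 : k ≤ m - 1)
    (hGauss : ∀ r : ℕ, 1 ≤ r → r ≤ m - 1 →
      digamma (r / m) =
        -Real.eulerMascheroniConstant - Real.log (2 * m) - (π / 2) * Real.cot (π * r / m)
          + ∑ l ∈ Finset.Icc 1 (m - 1),
              Real.cos (2 * π * r * l / m) * Real.log (Real.sin (π * l / m))) :
    (∑ r ∈ Finset.Icc 1 (m - 1), digamma (r / m) * Real.sin (2 * π * r * k / m)) =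
      (π / 2) * (2 * k - m) := by
  set evenPart : ℕ → ℝ := fun r => -eulerMascheroniConstant - log (2 * m) +
    ∑ l ∈ Icc 1 (m - 1), cos (2 * π * r * l / m) * log (sin (π * l / m))
  have hsplit : ∀ r ∈ Icc 1 (m - 1), digamma (r / m) * sin (2 * π * r * k / m) =
      evenPart r * sin (2 * π * r * k / m) -
        π / 2 * (cot (π * r / m) * sin (2 * π * r * k / m)) := by
    intro r hr
    rw [mem_Icc] at hr
    rw [hGauss r hr.1 hr.2]
    ring
  have hodd : ∑ r ∈ Icc 1 (m - 1), evenPart r * sin (2 * π * r * k / m) = 0 :=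
    sum_Icc_one_sub_one_eq_zero_of_reflect_eq_neg m _ fun r hr => by
      simp only [evenPart, cos_two_pi_mul_sub_div m r _ hr, sin_two_pi_mul_sub_div m r k hr,
        mul_neg]
  rw [sum_congr rfl hsplit, sum_sub_distrib, hodd, ← mul_sum,
    sum_Icc_cot_mul_sin_two_pi_mul_div m k hk1 (by omega)]
  ring

theorem stmt13 (m : ℕ) (hm : 2 ≤ m) (k : ℕ) (hk1 : 1 ≤ k) (hk2 : k ≤ m - 1)
    (hGauss : ∀ r : ℕ, 1 ≤ r → r ≤ m - 1 →
      digamma (r / m) =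
        -Real.eulerMascheroniConstant - Real.log (2 * m) - (π / 2) * Real.cot (π * r / m)
          + ∑ l ∈ Finset.Icc 1 (m - 1),
              Real.cos (2 * π * r * l / m) * Real.log (Real.sin (π * l / m))) :
    (∑ r ∈ Finset.Icc 1 (m - 1), digamma (r / m) * Real.sin (2 * π * r * k / m)) =
      (π / 2) * (2 * k - m) :=
  stmt13_general m k hk1 hk2 hGauss
end

section
/- For complex x, integer n ≥ 2, and any integer k, the algebraic identity ∑_{r=1}^{n-1} sinh(rx)·sin(2πrk/n) = -(1/2)·sinh(nx)·sin(2πk/n) / (cosh(x) - cos(2πk/n)) holds whenever cosh(x) ≠ cos(2πk/n). -/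
/-!
Multiplying the sum by `2 (cosh x - cos θ)` makes it telescope, because
`sinh ((t + 1) x) + sinh ((t - 1) x) = 2 sinh (t x) cosh x` and
`sin ((t + 1) θ) + sin ((t - 1) θ) = 2 sin (t θ) cos θ`.
With `θ = 2πk/n` the boundary term at `n` collapses to `-sinh (n x) sin θ`.
-/

namespace Complex

theorem sinh_mul_mul_sin_mul_mul_two_mul_cosh_sub_cos (x θ t : ℂ) :
    sinh (t * x) * sin (t * θ) * (2 * (cosh x - cos θ)) =
      (sinh ((t + 1) * x) * sin (t * θ) - sinh (t * x) * sin ((t + 1) * θ)) -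
        (sinh (t * x) * sin ((t - 1) * θ) - sinh ((t - 1) * x) * sin (t * θ)) := by
  simp only [add_mul, sub_mul, one_mul, sinh_add, sinh_sub, sin_add, sin_sub]
  ring

theorem sum_Icc_sinh_mul_sin_mul_mul_two_mul_cosh_sub_cos (x θ : ℂ) (m : ℕ) :
    (∑ r ∈ Finset.Icc 1 m, sinh (r * x) * sin (r * θ)) * (2 * (cosh x - cos θ)) =
      sinh ((m + 1) * x) * sin (m * θ) - sinh (m * x) * sin ((m + 1) * θ) := by
  induction m with
  | zero => simp
  | succ m ih =>
    rw [Finset.sum_Icc_succ_top (by omega), add_mul, ih,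
      sinh_mul_mul_sin_mul_mul_two_mul_cosh_sub_cos, Nat.cast_succ, add_sub_cancel_right]
    ring

theorem sum_Icc_sinh_mul_sin_mul_of_cos_mul_eq_one {x θ : ℂ} {n : ℕ}
    (hc : cos (n * θ) = 1) (hs : sin (n * θ) = 0) (h : cosh x ≠ cos θ) :
    ∑ r ∈ Finset.Icc 1 (n - 1), sinh (r * x) * sin (r * θ) =
      -(1 / 2) * (sinh (n * x) * sin θ) / (cosh x - cos θ) := by
  rcases n with _ | m
  · simp
  have hsin : sin (m * θ) = -sin θ := by
    rw [show (m : ℂ) * θ = (m + 1 : ℕ) * θ - θ by push_cast; ring, sin_sub, hc, hs]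
    ring
  have hsum := sum_Icc_sinh_mul_sin_mul_mul_two_mul_cosh_sub_cos x θ m
  rw [hsin, ← Nat.cast_succ, hs] at hsum
  rw [Nat.add_sub_cancel, eq_div_iff (sub_ne_zero_of_ne h)]
  linear_combination hsum / 2

end Complex

open Real Finset

theorem stmt15_general (x : ℂ) (n : ℕ) (k : ℤ)
    (h : Complex.cosh x ≠ (Real.cos (2 * π * k / n) : ℂ)) :
    (∑ r ∈ Finset.Icc 1 (n - 1),
        Complex.sinh (r * x) * (Real.sin (2 * π * r * k / n) : ℂ)) =
      -(1 / 2) * (Complex.sinh (n * x) * (Real.sin (2 * π * k / n) : ℂ)) /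
        (Complex.cosh x - (Real.cos (2 * π * k / n) : ℂ)) := by
  rcases eq_or_ne n 0 with rfl | hn
  · simp
  set θ : ℂ := 2 * π * k / n
  have hnθ : (n : ℂ) * θ = k * (2 * π) := by
    have : (n : ℂ) ≠ 0 := by exact_mod_cast hn
    simp only [θ]
    field_simp
  have hc : Complex.cos (n * θ) = 1 := by rw [hnθ, Complex.cos_int_mul_two_pi]
  have hs : Complex.sin (n * θ) = 0 := by
    rw [hnθ, show (k : ℂ) * (2 * π) = (2 * k : ℤ) * π by push_cast; ring, Complex.sin_int_mul_pi]
  have hterm (r : ℕ) : (Real.sin (2 * π * r * k / n) : ℂ) = Complex.sin (r * θ) := by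
    rw [Complex.ofReal_sin]
    congr 1
    push_cast
    ring
  simp only [hterm]
  push_cast at h ⊢
  exact Complex.sum_Icc_sinh_mul_sin_mul_of_cos_mul_eq_one hc hs h

theorem stmt15 (x : ℂ) (n : ℕ) (hn : 2 ≤ n) (k : ℤ)
    (h : Complex.cosh x ≠ (Real.cos (2 * π * k / n) : ℂ)) :
    (∑ r ∈ Finset.Icc 1 (n - 1),
        Complex.sinh (r * x) * (Real.sin (2 * π * r * k / n) : ℂ)) =
      -(1 / 2) * (Complex.sinh (n * x) * (Real.sin (2 * π * k / n) : ℂ)) /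
        (Complex.cosh x - (Real.cos (2 * π * k / n) : ℂ)) :=
  stmt15_general x n k h
end

section
/- For Re(p) > 0 and Re(a) > 1, ∫_0^∞ x^{a-1}·(cosh(px) - 1)/sinh(x) dx = (Γ(a)/2^a)·(ζ(a, 1/2 - p/2) + ζ(a, 1/2 + p/2) - 2·ζ(a, 1/2)), provided |Re(p)| < 1. -/
/-!
Since `1 / sinh x = 2 ∑ₙ e^{-(2n+1)x}` for `x > 0`, the integrand is
`x^{a-1} ∑ₙ (e^{-(2n+1-p)x} + e^{-(2n+1+p)x} - 2 e^{-(2n+1)x})`. Each exponential integrates to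
`Γ(a) c^{-a}`, also for complex `c` with `Re c > 0` by analytic continuation of Euler's integral in
`c`, and `2n+1∓p = 2 (n + (1∓p)/2)` turns the three resulting series into `2^{-a}` times Hurwitz
zeta values. Summing and integrating commute because `∑ₙ ∫ |term|` converges.
-/

open Real Finset

/-- The Hurwitz zeta function given by its defining series (valid for Re a > 1). -/
noncomputable def hzeta (a v : ℂ) : ℂ := ∑' n : ℕ, ((n : ℂ) + v) ^ (-a)

open MeasureTheory Set Filter Topology
open scoped Complex

lemma norm_cpow_mul_cexp_neg_mul {s c : ℂ} {t : ℝ} (ht : 0 < t) :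
    ‖(t : ℂ) ^ (s - 1) * cexp (-(c * t))‖ = t ^ (s.re - 1) * rexp (-(c.re * t)) := by
  rw [norm_mul, Complex.norm_cpow_eq_rpow_re_of_pos ht, Complex.norm_exp]
  simp

lemma continuousOn_cpow_mul_cexp_neg_mul (s c : ℂ) :
    ContinuousOn (fun t : ℝ ↦ (t : ℂ) ^ (s - 1) * cexp (-(c * t))) (Ioi 0) := by
  refine ContinuousOn.mul (fun t ht ↦ ?_) (by fun_prop)
  exact (Complex.continuousAt_ofReal_cpow_const t _ (Or.inr (ne_of_gt ht))).continuousWithinAt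

lemma integrableOn_cpow_mul_cexp_neg_mul {s c : ℂ} (hs : 0 < s.re) (hc : 0 < c.re) :
    IntegrableOn (fun t : ℝ ↦ (t : ℂ) ^ (s - 1) * cexp (-(c * t))) (Ioi 0) := by
  have hreal : IntegrableOn (fun t : ℝ ↦ t ^ (s.re - 1) * rexp (-(c.re * t))) (Ioi 0) := by
    simpa [neg_mul] using
      integrableOn_rpow_mul_exp_neg_mul_rpow (p := 1) (by linarith : -1 < s.re - 1) one_pos hc
  refine (integrable_norm_iff ((continuousOn_cpow_mul_cexp_neg_mul s c).aestronglyMeasurable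
    measurableSet_Ioi)).mp ?_
  exact hreal.congr_fun (fun t ht ↦ (norm_cpow_mul_cexp_neg_mul ht).symm) measurableSet_Ioi

lemma integral_norm_cpow_mul_cexp_neg_mul {s c : ℂ} (hs : 0 < s.re) (hc : 0 < c.re) :
    ∫ t in Ioi (0 : ℝ), ‖(t : ℂ) ^ (s - 1) * cexp (-(c * t))‖ =
      Real.Gamma s.re / c.re ^ s.re := by
  rw [setIntegral_congr_fun measurableSet_Ioi (fun t ht ↦ norm_cpow_mul_cexp_neg_mul ht),
    Real.integral_rpow_mul_exp_neg_mul_Ioi hs hc, one_div, inv_rpow hc.le, inv_mul_eq_div]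

lemma differentiableAt_integral_cpow_mul_cexp_neg_mul {s c : ℂ} (hs : 0 < s.re)
    (hc : 0 < c.re) :
    DifferentiableAt ℂ (fun z : ℂ ↦ ∫ t in Ioi (0 : ℝ), (t : ℂ) ^ (s - 1) * cexp (-(z * t))) c := by
  have hc2 : 0 < (c / 2).re := by simpa using hc
  have hderiv : ∀ (t : ℝ) (z : ℂ), HasDerivAt (fun z : ℂ ↦ (t : ℂ) ^ (s - 1) * cexp (-(z * t)))
      ((t : ℂ) ^ (s - 1) * (cexp (-(z * t)) * -t)) z := fun t z ↦
    ((hasDerivAt_mul_const (t : ℂ)).neg.cexp).const_mul _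
  -- on the ball of radius `Re c / 2` the derivative is dominated by `t ^ s * exp (-(Re c / 2) t)`
  have hbound : ∀ᵐ (t : ℝ) ∂volume.restrict (Ioi 0), ∀ z ∈ Metric.ball c (c.re / 2),
      ‖(t : ℂ) ^ (s - 1) * (cexp (-(z * t)) * -t)‖ ≤
        ‖(t : ℂ) ^ (s + 1 - 1) * cexp (-(c / 2 * t))‖ := by
    filter_upwards [ae_restrict_mem measurableSet_Ioi] with t (ht : 0 < t) z hz
    have hz : c.re / 2 ≤ z.re := by
      have := (Complex.abs_re_le_norm (z - c)).trans (mem_ball_iff_norm.mp hz).le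
      rw [Complex.sub_re] at this
      linarith [neg_abs_le (z.re - c.re)]
    rw [← mul_assoc, norm_mul, norm_cpow_mul_cexp_neg_mul ht, norm_cpow_mul_cexp_neg_mul ht,
      norm_neg, Complex.norm_real, Real.norm_of_nonneg ht.le, Complex.add_re, Complex.one_re,
      add_sub_cancel_right, Complex.div_ofNat_re]
    calc t ^ (s.re - 1) * rexp (-(z.re * t)) * t = t ^ s.re * rexp (-(z.re * t)) := by
          rw [mul_right_comm, ← rpow_add_one ht.ne', sub_add_cancel]
      _ ≤ t ^ s.re * rexp (-(c.re / 2 * t)) := by gcongr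
  have hcont : ContinuousOn (fun t : ℝ ↦ (t : ℂ) ^ (s - 1) * (cexp (-(c * t)) * -t)) (Ioi 0) := by
    simpa only [mul_assoc] using
      (continuousOn_cpow_mul_cexp_neg_mul s c).fun_mul (g := fun t : ℝ ↦ -(t : ℂ)) (by fun_prop)
  exact (hasDerivAt_integral_of_dominated_loc_of_deriv_le (Metric.ball_mem_nhds c (by linarith))
    (Eventually.of_forall fun z ↦ (continuousOn_cpow_mul_cexp_neg_mul s z).aestronglyMeasurable
      measurableSet_Ioi)
    (integrableOn_cpow_mul_cexp_neg_mul hs hc) (hcont.aestronglyMeasurable measurableSet_Ioi)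
    hbound (integrableOn_cpow_mul_cexp_neg_mul (by simpa using by linarith) hc2).norm
    (Eventually.of_forall fun t z _ ↦ hderiv t z)).2.differentiableAt

/-- Both sides are holomorphic in `c` on the right half-plane and agree on the positive reals by
`Complex.integral_cpow_mul_exp_neg_mul_Ioi`. -/
lemma integral_cpow_mul_cexp_neg_mul {s c : ℂ} (hs : 0 < s.re) (hc : 0 < c.re) :
    ∫ t in Ioi (0 : ℝ), (t : ℂ) ^ (s - 1) * cexp (-(c * t)) = Complex.Gamma s / c ^ s := by
  let U : Set ℂ := {z | 0 < z.re}
  have hU : IsOpen U := isOpen_lt continuous_const Complex.continuous_re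
  have hlhs : AnalyticOnNhd ℂ
      (fun z : ℂ ↦ ∫ t in Ioi (0 : ℝ), (t : ℂ) ^ (s - 1) * cexp (-(z * t))) U :=
    DifferentiableOn.analyticOnNhd (fun z hz ↦
      (differentiableAt_integral_cpow_mul_cexp_neg_mul hs hz).differentiableWithinAt) hU
  have hrhs : AnalyticOnNhd ℂ (fun z : ℂ ↦ Complex.Gamma s / z ^ s) U :=
    DifferentiableOn.analyticOnNhd (fun z (hz : 0 < z.re) ↦
      ((differentiableAt_const _).div (differentiableAt_id.cpow_const (Or.inl hz))
        (Complex.cpow_ne_zero_iff.mpr (Or.inl (Complex.ne_zero_of_re_pos hz)))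
        ).differentiableWithinAt) hU
  have hreal : ∀ r : ℝ, 0 < r → ∫ t in Ioi (0 : ℝ), (t : ℂ) ^ (s - 1) * cexp (-(r * t)) =
      Complex.Gamma s / (r : ℂ) ^ s := by
    intro r hr
    have harg : (r : ℂ).arg ≠ π := by rw [Complex.arg_ofReal_of_nonneg hr.le]; exact pi_ne_zero.symm
    rw [Complex.integral_cpow_mul_exp_neg_mul_Ioi hs hr, one_div, Complex.inv_cpow _ _ harg,
      div_eq_inv_mul]
  have hray : Tendsto (fun r : ℝ ↦ (r : ℂ)) (𝓝[≠] 1) (𝓝[≠] 1) := by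
    simpa using Complex.continuous_ofReal.continuousWithinAt.tendsto_nhdsWithin
      (x := 1) (t := {(1 : ℂ)}ᶜ) fun x hx ↦ by simpa using hx
  have hfreq : ∃ᶠ z in 𝓝[≠] (1 : ℂ), ∫ t in Ioi (0 : ℝ), (t : ℂ) ^ (s - 1) * cexp (-(z * t)) =
      Complex.Gamma s / z ^ s :=
    hray.frequently
      ((eventually_nhdsWithin_of_eventually_nhds (lt_mem_nhds one_pos)).mono hreal).frequently
  exact hlhs.eqOn_of_preconnected_of_frequently_eq hrhs (convex_halfSpace_re_gt 0).isPreconnected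
    (by simp [U]) hfreq hc

/-- `hasSum_mellin` with complex exponents `c i`. -/
lemma hasSum_mellin_of_re_pos {ι : Type*} [Countable ι] {w c : ι → ℂ} {F : ℝ → ℂ} {s : ℂ}
    (hc : ∀ i, 0 < (c i).re) (hs : 0 < s.re)
    (hF : ∀ t : ℝ, 0 < t → HasSum (fun i ↦ w i * cexp (-(c i * t))) (F t))
    (h_sum : Summable fun i ↦ ‖w i‖ / (c i).re ^ s.re) :
    HasSum (fun i ↦ Complex.Gamma s * w i / c i ^ s) (mellin F s) := by
  simp_rw [mellin, smul_eq_mul, ← setIntegral_congr_fun measurableSet_Ioi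
    (fun t (ht : 0 < t) ↦ congr_arg _ (hF t ht).tsum_eq), ← tsum_mul_left, mul_left_comm _ (w _)]
  refine (hasSum_integral_of_summable_integral_norm (μ := volume.restrict (Ioi 0))
    (F := fun i (t : ℝ) ↦ w i * ((t : ℂ) ^ (s - 1) * cexp (-(c i * t))))
    (fun i ↦ (integrableOn_cpow_mul_cexp_neg_mul hs (hc i)).const_mul (w i)) ?_).congr_fun
    fun i ↦ ?_
  · refine (h_sum.mul_left (Real.Gamma s.re)).congr fun i ↦ ?_
    simp_rw [norm_mul (w i), integral_const_mul, integral_norm_cpow_mul_cexp_neg_mul hs (hc i)]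
    ring
  · rw [integral_const_mul, integral_cpow_mul_cexp_neg_mul hs (hc i)]
    ring

lemma hasSum_cexp_neg_two_mul_nat_add_mul (v : ℂ) {x : ℂ} (hx : 0 < x.re) :
    HasSum (fun n : ℕ ↦ cexp (-(2 * (n + v) * x)))
      (cexp ((1 - 2 * v) * x) / (2 * Complex.sinh x)) := by
  have hr : ‖cexp (-2 * x)‖ < 1 := by
    rw [Complex.norm_exp, Real.exp_lt_one_iff]
    simpa using hx
  have h1r : 1 - cexp (-2 * x) ≠ 0 := sub_ne_zero.mpr fun h ↦ by rw [← h] at hr; simp at hr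
  have hsinh : 2 * Complex.sinh x = cexp x * (1 - cexp (-2 * x)) := by
    rw [Complex.two_sinh, mul_sub, mul_one, ← Complex.exp_add]
    ring_nf
  rw [hsinh, show (1 - 2 * v) * x = x + -(2 * v * x) by ring, Complex.exp_add,
    mul_div_mul_left _ _ (Complex.exp_ne_zero x), div_eq_mul_inv]
  refine ((hasSum_geometric_of_norm_lt_one hr).mul_left _).congr_fun fun n ↦ ?_
  rw [← Complex.exp_nat_mul, ← Complex.exp_add]
  ring_nf

lemma summable_nat_add_cpow_neg {a v : ℂ} (ha : 1 < a.re) (hv : 0 < v.re) :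
    Summable fun n : ℕ ↦ ((n : ℂ) + v) ^ (-a) := by
  refine (((summable_one_div_nat_add_rpow v.re a.re).mpr ha).mul_left
    (rexp (π * |a.im|))).of_norm_bounded fun n ↦ ?_
  have hre : ((n : ℂ) + v).re = n + v.re := by simp
  have hpos : 0 < (n : ℝ) + v.re := by positivity
  refine (Complex.norm_cpow_le _ _).trans ?_
  rw [div_eq_mul_inv, ← Real.exp_neg, mul_comm, abs_of_pos hpos, one_div, ← rpow_neg hpos.le,
    Complex.neg_re, Complex.neg_im]
  refine mul_le_mul (exp_le_exp.mpr ?_)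
    (rpow_le_rpow_of_nonpos hpos (hre ▸ Complex.re_le_norm _) (by linarith)) (by positivity)
    (by positivity)
  calc -(((n : ℂ) + v).arg * -a.im) ≤ |((n : ℂ) + v).arg| * |a.im| := by
        rw [mul_neg, neg_neg, ← abs_mul]; exact le_abs_self _
    _ ≤ π * |a.im| := by gcongr; exact Complex.abs_arg_le_pi _

lemma ofReal_mul_cpow {r : ℝ} (hr : 0 < r) (z w : ℂ) :
    ((r : ℂ) * z) ^ w = (r : ℂ) ^ w * z ^ w := by
  rcases eq_or_ne z 0 with rfl | hz
  · rcases eq_or_ne w 0 with rfl | hw <;> simp [*]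
  rw [Complex.cpow_def_of_ne_zero (mul_ne_zero (Complex.ofReal_ne_zero.mpr hr.ne') hz),
    Complex.cpow_def_of_ne_zero (Complex.ofReal_ne_zero.mpr hr.ne'),
    Complex.cpow_def_of_ne_zero hz, Complex.log_ofReal_mul hr hz, add_mul, Complex.exp_add,
    Complex.ofReal_log hr.le]

lemma hasSum_div_two_mul_nat_add_cpow (b : ℂ) {a v : ℂ} (ha : 1 < a.re) (hv : 0 < v.re) :
    HasSum (fun n : ℕ ↦ b / (2 * ((n : ℂ) + v)) ^ a) (b * hzeta a v / 2 ^ a) := by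
  refine (((summable_nat_add_cpow_neg ha hv).hasSum.mul_left b).div_const _).congr_fun fun n ↦ ?_
  rw [← Complex.ofReal_ofNat, ofReal_mul_cpow two_pos, Complex.cpow_neg]
  ring

lemma re_two_mul_natCast_add (n : ℕ) (v : ℂ) : (2 * ((n : ℂ) + v)).re = 2 * (n + v.re) := by
  simp

lemma summable_norm_div_re_two_mul_nat_add_rpow (w : ℂ) {v : ℂ} {σ : ℝ} (hσ : 1 < σ)
    (hv : 0 < v.re) : Summable fun n : ℕ ↦ ‖w‖ / (2 * ((n : ℂ) + v)).re ^ σ := by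
  refine (((summable_one_div_nat_add_rpow v.re σ).mpr hσ).mul_left (‖w‖ / 2 ^ σ)).congr
    fun n ↦ ?_
  have hpos : 0 < (n : ℝ) + v.re := by positivity
  rw [abs_of_pos hpos, re_two_mul_natCast_add, mul_rpow zero_le_two hpos.le]
  ring

/-- `(cosh (p x) - 1) / sinh x = ∑ₙ (e^{-(2n+1-p)x} + e^{-(2n+1+p)x} - 2 e^{-(2n+1)x})` as a single
series `∑ᵢ w i * exp (-(c i * x))` over `ℕ ⊕ ℕ ⊕ ℕ`; `c` is written as `2 (n + v)` with the three
Hurwitz shifts `v`. -/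
noncomputable def coshKernelWeight : ℕ ⊕ ℕ ⊕ ℕ → ℂ :=
  Sum.elim (fun _ ↦ 1) (Sum.elim (fun _ ↦ 1) (fun _ ↦ -2))

noncomputable def coshKernelExponent (p : ℂ) : ℕ ⊕ ℕ ⊕ ℕ → ℂ :=
  Sum.elim (fun n ↦ 2 * (n + (1 / 2 - p / 2)))
    (Sum.elim (fun n ↦ 2 * (n + (1 / 2 + p / 2))) (fun n ↦ 2 * (n + 1 / 2)))

lemma re_half_sub_half_pos_and_re_half_add_half_pos {p : ℂ} (hp : |p.re| < 1) :
    0 < (1 / 2 - p / 2 : ℂ).re ∧ 0 < (1 / 2 + p / 2 : ℂ).re := by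
  obtain ⟨hp₁, hp₂⟩ := abs_lt.mp hp
  constructor <;> simp <;> linarith

lemma hasSum_coshKernel (p : ℂ) {x : ℂ} (hx : 0 < x.re) :
    HasSum (fun i ↦ coshKernelWeight i * cexp (-(coshKernelExponent p i * x)))
      ((Complex.cosh (p * x) - 1) / Complex.sinh x) := by
  have h := HasSum.sum (f := fun i ↦ coshKernelWeight i * cexp (-(coshKernelExponent p i * x)))
    ((hasSum_cexp_neg_two_mul_nat_add_mul _ hx).mul_left 1)
    (HasSum.sum ((hasSum_cexp_neg_two_mul_nat_add_mul _ hx).mul_left 1)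
      ((hasSum_cexp_neg_two_mul_nat_add_mul (1 / 2) hx).mul_left (-2)))
  convert h using 1
  rw [show (1 - 2 * (1 / 2 - p / 2)) * x = p * x by ring,
    show (1 - 2 * (1 / 2 + p / 2)) * x = -(p * x) by ring,
    show (1 - 2 * (1 / 2 : ℂ)) * x = 0 by ring, Complex.exp_zero, Complex.cosh]
  ring

lemma re_coshKernelExponent_pos {p : ℂ} (hp : |p.re| < 1) (i : ℕ ⊕ ℕ ⊕ ℕ) :
    0 < (coshKernelExponent p i).re := by
  obtain ⟨hv₁, hv₂⟩ := re_half_sub_half_pos_and_re_half_add_half_pos hp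
  have key (n : ℕ) {v : ℂ} (hv : 0 < v.re) : 0 < (2 * ((n : ℂ) + v)).re := by
    rw [re_two_mul_natCast_add]
    positivity
  rcases i with n | n | n
  exacts [key n hv₁, key n hv₂, key n (by norm_num)]

lemma summable_coshKernel {p : ℂ} (hp : |p.re| < 1) {σ : ℝ} (hσ : 1 < σ) :
    Summable fun i ↦ ‖coshKernelWeight i‖ / (coshKernelExponent p i).re ^ σ := by
  obtain ⟨hv₁, hv₂⟩ := re_half_sub_half_pos_and_re_half_add_half_pos hp
  exact .sum _ (summable_norm_div_re_two_mul_nat_add_rpow 1 hσ hv₁)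
    (.sum _ (summable_norm_div_re_two_mul_nat_add_rpow 1 hσ hv₂)
      (summable_norm_div_re_two_mul_nat_add_rpow (-2) hσ (by norm_num)))

lemma hasSum_Gamma_mul_coshKernel {p a : ℂ} (hp : |p.re| < 1) (ha : 1 < a.re) :
    HasSum (fun i ↦ Complex.Gamma a * coshKernelWeight i / coshKernelExponent p i ^ a)
      (Complex.Gamma a / 2 ^ a *
        (hzeta a (1 / 2 - p / 2) + hzeta a (1 / 2 + p / 2) - 2 * hzeta a (1 / 2))) := by
  obtain ⟨hv₁, hv₂⟩ := re_half_sub_half_pos_and_re_half_add_half_pos hp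
  have h := HasSum.sum
    (f := fun i ↦ Complex.Gamma a * coshKernelWeight i / coshKernelExponent p i ^ a)
    (hasSum_div_two_mul_nat_add_cpow (Complex.Gamma a * 1) ha hv₁)
    (HasSum.sum (hasSum_div_two_mul_nat_add_cpow (Complex.Gamma a * 1) ha hv₂)
      (hasSum_div_two_mul_nat_add_cpow (Complex.Gamma a * -2) ha (by norm_num)))
  convert h using 1
  ring

theorem stmt16_general (p a : ℂ) (hp1 : |p.re| < 1) (ha : 1 < a.re) :
    (∫ x in Set.Ioi (0 : ℝ),
        (x : ℂ) ^ (a - 1) * (Complex.cosh (p * x) - 1) / Complex.sinh (x : ℂ)) =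
      (Complex.Gamma a / 2 ^ a) *
        (hzeta a (1 / 2 - p / 2) + hzeta a (1 / 2 + p / 2) - 2 * hzeta a (1 / 2)) := by
  have hmellin := hasSum_mellin_of_re_pos (re_coshKernelExponent_pos hp1) (by linarith)
    (fun t ht ↦ hasSum_coshKernel p (x := t) (by simpa using ht)) (summable_coshKernel hp1 ha)
  rw [(hasSum_Gamma_mul_coshKernel hp1 ha).unique hmellin, mellin]
  simp_rw [smul_eq_mul, mul_div_assoc]

theorem stmt16 (p a : ℂ) (hp : 0 < p.re) (hp1 : |p.re| < 1) (ha : 1 < a.re) :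
    (∫ x in Set.Ioi (0 : ℝ),
        (x : ℂ) ^ (a - 1) * (Complex.cosh (p * x) - 1) / Complex.sinh (x : ℂ)) =
      (Complex.Gamma a / 2 ^ a) *
        (hzeta a (1 / 2 - p / 2) + hzeta a (1 / 2 + p / 2) - 2 * hzeta a (1 / 2)) :=
  stmt16_general p a hp1 ha
end

section
/- Hurwitz's formula: for real p with 0 < p ≤ 1 and complex a with Re(a) < 0, ζ(a,p) = (2·Γ(1-a)/(2π)^{1-a})·( sin(πa/2)·∑_{n=1}^∞ cos(2πpn)/n^{1-a} + cos(πa/2)·∑_{n=1}^∞ sin(2πpn)/n^{1-a} ). -/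
open Real Finset Complex HurwitzZeta

theorem stmt17 (p : ℝ) (hp0 : 0 < p) (hp1 : p ≤ 1) (a : ℂ) (ha : a.re < 0) :
    hurwitzZeta (p : UnitAddCircle) a =
      (2 * Complex.Gamma (1 - a) / (2 * (π : ℂ)) ^ (1 - a)) *
        (Complex.sin (π * a / 2) *
            (∑' n : ℕ, (Real.cos (2 * π * p * (n + 1)) : ℂ) / ((n : ℂ) + 1) ^ (1 - a))
          + Complex.cos (π * a / 2) *
            (∑' n : ℕ, (Real.sin (2 * π * p * (n + 1)) : ℂ) / ((n : ℂ) + 1) ^ (1 - a))) := by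
  set s : ℂ := 1 - a with hsdef
  clear_value s
  have haeq : a = 1 - s := by rw [hsdef]; ring
  have hs : 1 < s.re := by rw [hsdef]; simp; linarith
  have hsne : ∀ n : ℕ, s ≠ -n := by
    intro n h
    have h2 : s.re = (-(n:ℂ)).re := by rw [h]
    simp at h2
    have : (0:ℝ) ≤ (n:ℝ) := n.cast_nonneg
    linarith
  have hs1 : s ≠ 1 := by
    intro h; rw [h] at hs; simp at hs
  have hcos := hasSum_nat_cosZeta p hs
  have hsin := hasSum_nat_sinZeta p hs
  have hcos0 : (fun n : ℕ ↦ (Real.cos (2 * π * p * n) : ℂ) / (n : ℂ) ^ s) 0 = 0 := by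
    simp [zero_cpow (ne_zero_of_one_lt_re hs)]
  have hsin0 : (fun n : ℕ ↦ (Real.sin (2 * π * p * n) : ℂ) / (n : ℂ) ^ s) 0 = 0 := by
    simp [zero_cpow (ne_zero_of_one_lt_re hs)]
  have hcos' : (∑' n : ℕ, (Real.cos (2 * π * p * (n + 1)) : ℂ) / ((n : ℂ) + 1) ^ s)
      = cosZeta p s := by
    have h2 := (hasSum_nat_add_iff'
      (f := fun n : ℕ ↦ (Real.cos (2 * π * p * n) : ℂ) / (n : ℂ) ^ s) 1).mpr hcos
    simp only [Finset.range_one, Finset.sum_singleton, hcos0, sub_zero] at h2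
    rw [← h2.tsum_eq]
    push_cast
    norm_num
  have hsin' : (∑' n : ℕ, (Real.sin (2 * π * p * (n + 1)) : ℂ) / ((n : ℂ) + 1) ^ s)
      = sinZeta p s := by
    have h2 := (hasSum_nat_add_iff'
      (f := fun n : ℕ ↦ (Real.sin (2 * π * p * n) : ℂ) / (n : ℂ) ^ s) 1).mpr hsin
    simp only [Finset.range_one, Finset.sum_singleton, hsin0, sub_zero] at h2
    rw [← h2.tsum_eq]
    push_cast
    norm_num
  rw [hcos', hsin']
  have key : hurwitzZeta (p : UnitAddCircle) (1 - s) = (2 * π : ℂ) ^ (-s) * Complex.Gamma s *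
      (Complex.exp (-π * I * s / 2) * expZeta p s + Complex.exp (π * I * s / 2) * expZeta (-p) s) :=
    hurwitzZeta_one_sub _ hsne (Or.inr hs1)
  rw [haeq, key]
  rw [expZeta, expZeta, cosZeta_neg, sinZeta_neg]
  have hsin_s : Complex.sin (π * (1 - s) / 2) = Complex.cos (π * s / 2) := by
    rw [show (π:ℂ) * (1 - s) / 2 = π / 2 - π * s / 2 by ring, Complex.sin_pi_div_two_sub]
  have hcos_s : Complex.cos (π * (1 - s) / 2) = Complex.sin (π * s / 2) := by
    rw [show (π:ℂ) * (1 - s) / 2 = π / 2 - π * s / 2 by ring, Complex.cos_pi_div_two_sub]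
  rw [hsin_s, hcos_s, Complex.cos, Complex.sin]
  rw [show (2 * π : ℂ) ^ (-s) = 1 / (2 * π : ℂ) ^ s by rw [cpow_neg]; ring]
  rw [show (-(π:ℂ)) * I * s / 2 = -(π * s / 2 * I) by ring,
    show (π:ℂ) * I * s / 2 = π * s / 2 * I by ring]
  generalize (2 * (π:ℂ)) ^ s = x
  generalize Complex.exp (π * s / 2 * I) = y
  rw [show (-((π:ℂ) * s / 2)) * I = -(π * s / 2 * I) by ring]
  generalize Complex.exp (-(π * s / 2 * I)) = z
  generalize cosZeta p s = C
  generalize sinZeta p s = S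
  generalize Complex.Gamma s = G
  field_simp
  ring_nf
end

section
/- Multiplication theorem for the second derivative of Hurwitz zeta at 0: for every integer m ≥ 2, ∑_{l=1}^{m-1} ζ''(0, l/m) = -(1/2)·ln² m - ln m · ln(2π), where ζ''(0,v) denotes the second derivative of s ↦ ζ(s,v) evaluated at s = 0. -/
/-!
By the multiplication theorem `∑_{l=0}^{m-1} ζ(s, l/m) = m^s ζ(s)`, the sum over `1 ≤ l ≤ m - 1`
is `(m^s - 1) ζ(s)` near `s = 0`. Since `m^s - 1` vanishes at `0` with derivatives `log m` and
`log² m` there, Leibniz' rule gives the second derivative `log² m · ζ(0) + 2 log m · ζ'(0)`,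
and `ζ(0) = -1/2`, `ζ'(0) = -log(2π)/2`.
-/

open Real Finset Complex HurwitzZeta

lemma analyticOnNhd_compl_singleton_of_differentiableAt {f : ℂ → ℂ} {a : ℂ}
    (hf : ∀ z ≠ a, DifferentiableAt ℂ f z) : AnalyticOnNhd ℂ f {a}ᶜ :=
  DifferentiableOn.analyticOnNhd (fun z hz ↦ (hf z hz).differentiableWithinAt)
    isOpen_compl_singleton

namespace ZMod

variable {N : ℕ} [NeZero N]

lemma LFunction_one_eq_riemannZeta {s : ℂ} (hs : s ≠ 1) :
    LFunction (1 : ZMod N → ℂ) s = riemannZeta s := by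
  have h2 : (2 : ℂ) ∈ ({1}ᶜ : Set ℂ) := by norm_num
  refine AnalyticOnNhd.eqOn_of_preconnected_of_eventuallyEq
    (analyticOnNhd_compl_singleton_of_differentiableAt
      fun z hz ↦ differentiableAt_LFunction _ z (.inl hz))
    (analyticOnNhd_compl_singleton_of_differentiableAt fun z hz ↦ differentiableAt_riemannZeta hz)
    (isConnected_compl_singleton_of_one_lt_rank (by simp) _).isPreconnected h2 ?_ hs
  filter_upwards [(continuous_re.isOpen_preimage _ isOpen_Ioi).mem_nhds
    (by norm_num : (2 : ℂ).re ∈ Set.Ioi 1)] with z (hz : 1 < z.re)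
  rw [LFunction_eq_LSeries _ hz, ← LSeries_one_eq_riemannZeta hz]
  rfl

lemma sum_hurwitzZeta_toAddCircle {s : ℂ} (hs : s ≠ 1) :
    ∑ j : ZMod N, hurwitzZeta (toAddCircle j) s = (N : ℂ) ^ s * riemannZeta s := by
  rw [← LFunction_one_eq_riemannZeta (N := N) hs, LFunction, ← mul_assoc,
    ← cpow_add _ _ (Nat.cast_ne_zero.mpr (NeZero.ne N)), add_neg_cancel, cpow_zero, one_mul]
  simp only [Pi.one_apply, one_mul]

end ZMod

lemma sum_Icc_hurwitzZeta_div {N : ℕ} [NeZero N] {s : ℂ} (hs : s ≠ 1) :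
    ∑ l ∈ Icc 1 (N - 1), hurwitzZeta ((l / N : ℝ) : UnitAddCircle) s
      = ((N : ℂ) ^ s - 1) * riemannZeta s := by
  have hrange : ∑ l ∈ range N, hurwitzZeta ((l / N : ℝ) : UnitAddCircle) s
      = (N : ℂ) ^ s * riemannZeta s := by
    rw [← ZMod.sum_hurwitzZeta_toAddCircle hs]
    refine sum_nbij' (fun l ↦ (l : ZMod N)) ZMod.val (by simp) (by simp [ZMod.val_lt])
      (fun l hl ↦ ZMod.val_cast_of_lt (mem_range.mp hl)) (fun j _ ↦ ZMod.natCast_zmod_val j)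
      (fun l hl ↦ by rw [ZMod.toAddCircle_apply, ZMod.val_cast_of_lt (mem_range.mp hl)])
  have hsplit : range N = insert 0 (Icc 1 (N - 1)) := by
    have := NeZero.ne N
    ext l
    simp only [mem_range, mem_insert, mem_Icc]
    omega
  rw [hsplit, sum_insert (by simp), CharP.cast_eq_zero, zero_div, QuotientAddGroup.mk_zero,
    hurwitzZeta_zero] at hrange
  linear_combination hrange

lemma iteratedDeriv_cpow_sub_one_zero {a : ℂ} (ha : a ≠ 0) {n : ℕ} (hn : n ≠ 0) :
    iteratedDeriv n (fun s : ℂ ↦ a ^ s - 1) 0 = log a ^ n := by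
  simp_rw [cpow_def_of_ne_zero ha]
  rw [iteratedDeriv_fun_sub (by fun_prop) (by fun_prop)]
  simp [iteratedDeriv_const, hn]

lemma iteratedDeriv_two_cpow_sub_one_mul_zero {a : ℂ} (ha : a ≠ 0) {g : ℂ → ℂ}
    (hg : ContDiffAt ℂ 2 g 0) :
    iteratedDeriv 2 (fun s ↦ (a ^ s - 1) * g s) 0 = log a ^ 2 * g 0 + 2 * log a * deriv g 0 := by
  have hf : ContDiffAt ℂ 2 (fun s : ℂ ↦ a ^ s - 1) 0 := by
    simp_rw [cpow_def_of_ne_zero ha]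
    fun_prop
  rw [iteratedDeriv_fun_mul hf hg]
  simp [sum_range_succ, iteratedDeriv_cpow_sub_one_zero ha, add_comm]

theorem stmt19 (m : ℕ) (hm : 2 ≤ m) :
    (∑ l ∈ Finset.Icc 1 (m - 1),
        iteratedDeriv 2 (fun s : ℂ => hurwitzZeta ((l / m : ℝ) : UnitAddCircle) s) 0) =
      ((-(1 / 2) * Real.log m ^ 2 - Real.log m * Real.log (2 * π) : ℝ) : ℂ) := by
  have : NeZero m := ⟨by omega⟩
  have h0 : (0 : ℂ) ∈ ({1}ᶜ : Set ℂ) := by norm_num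
  have hHurwitz (a : UnitAddCircle) : ContDiffAt ℂ 2 (hurwitzZeta a) 0 :=
    (analyticOnNhd_compl_singleton_of_differentiableAt
      (fun z hz ↦ differentiableAt_hurwitzZeta a hz) 0 h0).contDiffAt
  have hZeta : ContDiffAt ℂ 2 riemannZeta 0 :=
    (analyticOnNhd_compl_singleton_of_differentiableAt
      (fun z hz ↦ differentiableAt_riemannZeta hz) 0 h0).contDiffAt
  have hsum : (fun s ↦ ∑ l ∈ Icc 1 (m - 1), hurwitzZeta ((l / m : ℝ) : UnitAddCircle) s)
      =ᶠ[nhds 0] fun s ↦ ((m : ℂ) ^ s - 1) * riemannZeta s := by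
    filter_upwards [isOpen_compl_singleton.mem_nhds h0] with s hs
    exact sum_Icc_hurwitzZeta_div hs
  rw [← iteratedDeriv_fun_sum fun l _ ↦ hHurwitz _, hsum.iteratedDeriv_eq,
    iteratedDeriv_two_cpow_sub_one_mul_zero (Nat.cast_ne_zero.mpr (NeZero.ne m)) hZeta,
    riemannZeta_zero, deriv_riemannZeta_zero]
  push_cast [ofReal_log (by positivity : (0 : ℝ) ≤ 2 * π)]
  ring
end
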